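/- arXiv:2302.06535 — 3 statements merged into one kernel-verified Lean document; each statement's English description precedes it below -/
import Mathlib

section
/- In the two-dimensional setting, fix θ ∈ (−π/2, π/2), β > 0, and τ > 0. Define, as functions of λ ≥ 1, R(τ) := β⁻¹ (e^{−τ} cos²θ + λ⁻¹ e^{−λτ} sin²θ) and R₁(τ) := β⁻¹ B⁻¹ e^{−τ B} with B = λ / (λ cos²θ + sin²θ). Then, as λ → +∞, |R(τ) − R₁(τ)| = β⁻¹ (e^{−τ} − e^{−τ sec²θ}) cos²θ + O(λ⁻¹); that is, the function λ ↦ |R(τ) − R₁(τ)| − β⁻¹ (e^{−τ} − e^{−τ sec²θ}) cos²θ is O(λ⁻¹) as λ → +∞. -/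
open Real Filter Asymptotics

/-! Since `B⁻¹ = cos²θ + λ⁻¹ sin²θ`, the difference `R - R₁` equals the limit
`β⁻¹ (e^{-τ} - e^{-τ sec²θ}) cos²θ` up to `λ⁻¹` times bounded exponentials and
`cos²θ (e^{-τ sec²θ} - e^{-τ B})`; the latter is `O(λ⁻¹)` because `exp` is `1`-Lipschitz on
`(-∞, 0]` and `sec²θ - B = O(λ⁻¹)`. The limit is nonnegative, so `||x| - L| ≤ |x - L|` lets
the estimate pass to `|R - R₁|`. -/

lemma abs_exp_sub_exp_le_of_nonpos {x y : ℝ} (hx : x ≤ 0) (hy : y ≤ 0) :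
    |exp x - exp y| ≤ |x - y| := by
  wlog hyx : y ≤ x generalizing x y
  · rw [abs_sub_comm, abs_sub_comm x]
    exact this hy hx (le_of_not_ge hyx)
  have hexp_y : exp y = exp x * exp (y - x) := by rw [← exp_add, add_sub_cancel]
  have hexp_x : exp x ≤ 1 := exp_le_one_iff.mpr hx
  have hxy : 0 ≤ x - y := sub_nonneg.mpr hyx
  rw [abs_of_nonneg (sub_nonneg.mpr (exp_le_exp.mpr hyx)), abs_of_nonneg hxy, hexp_y]
  calc exp x - exp x * exp (y - x) = exp x * (1 - exp (y - x)) := by ring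
    _ ≤ 1 * (x - y) :=
        mul_le_mul hexp_x (by linarith [add_one_le_exp (y - x)])
          (sub_nonneg.mpr (exp_le_one_iff.mpr (by linarith))) zero_le_one
    _ = x - y := one_mul _

lemma isBigO_mul_exp_neg {α : Type*} {l : Filter α} {f g : α → ℝ} (hf : ∀ᶠ x in l, 0 ≤ f x) :
    (fun x => g x * exp (-f x)) =O[l] g :=
  IsBigO.of_bound' <| hf.mono fun x hx => by
    rw [norm_mul, Real.norm_of_nonneg (exp_pos _).le]
    exact mul_le_of_le_one_right (norm_nonneg _) (exp_le_one_iff.mpr (neg_nonpos.mpr hx))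

section
variable {c s : ℝ}

lemma isBigO_div_mul_add_sub_inv (hc : 0 < c) (hs : 0 ≤ s) :
    (fun x : ℝ => x / (x * c + s) - c⁻¹) =O[atTop] fun x => x⁻¹ := by
  refine IsBigO.of_bound (s / c ^ 2) ?_
  filter_upwards [eventually_gt_atTop 0] with x hx
  have hden : 0 < x * c + s := by positivity
  have hdiff : x / (x * c + s) - c⁻¹ = -(s / (c * (x * c + s))) := by
    field_simp
    ring
  rw [hdiff, norm_neg, norm_inv, Real.norm_of_nonneg (by positivity),
    Real.norm_of_nonneg hx.le]
  calc s / (c * (x * c + s)) ≤ s / (c * (x * c)) := by gcongr; linarith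
    _ = s / c ^ 2 * x⁻¹ := by field_simp

lemma isBigO_exp_neg_mul_div_mul_add_sub (hc : 0 < c) (hs : 0 ≤ s) {τ : ℝ} (hτ : 0 ≤ τ) :
    (fun x : ℝ => exp (-(τ * (x / (x * c + s)))) - exp (-(τ / c)))
      =O[atTop] fun x => x⁻¹ := by
  have hlip : (fun x : ℝ => exp (-(τ * (x / (x * c + s)))) - exp (-(τ / c)))
      =O[atTop] fun x => τ * (x / (x * c + s) - c⁻¹) := by
    refine IsBigO.of_bound' ?_
    filter_upwards [eventually_ge_atTop 0] with x hx
    have h := abs_exp_sub_exp_le_of_nonpos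
      (neg_nonpos.mpr (by positivity : 0 ≤ τ * (x / (x * c + s))))
      (neg_nonpos.mpr (by positivity : 0 ≤ τ / c))
    rw [Real.norm_eq_abs, Real.norm_eq_abs, ← abs_neg (τ * _)]
    exact h.trans_eq (congrArg abs (by ring))
  exact hlip.trans ((isBigO_div_mul_add_sub_inv hc hs).const_mul_left τ)

lemma isBigO_autocov_diff_sub_limit (hc : 0 < c) (hs : 0 ≤ s) {τ : ℝ} (hτ : 0 ≤ τ) (β : ℝ) :
    (fun x : ℝ => β⁻¹ * (exp (-τ) * c + x⁻¹ * exp (-(x * τ)) * s)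
        - β⁻¹ * (x / (x * c + s))⁻¹ * exp (-(τ * (x / (x * c + s))))
        - β⁻¹ * (exp (-τ) - exp (-(τ / c))) * c) =O[atTop] fun x => x⁻¹ := by
  set B : ℝ → ℝ := fun x => x / (x * c + s)
  have hB_nonneg : ∀ᶠ x in atTop, 0 ≤ τ * B x :=
    (eventually_ge_atTop 0).mono fun x hx => by positivity
  have hexp_x : (fun x => x⁻¹ * exp (-(x * τ))) =O[atTop] fun x => x⁻¹ :=
    isBigO_mul_exp_neg ((eventually_ge_atTop 0).mono fun x hx => by positivity)
  have hexp_B : (fun x => x⁻¹ * exp (-(τ * B x))) =O[atTop] fun x => x⁻¹ :=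
    isBigO_mul_exp_neg hB_nonneg
  have hdecomp : (fun x => β⁻¹ * (s * (x⁻¹ * exp (-(x * τ))) - s * (x⁻¹ * exp (-(τ * B x)))
        - c * (exp (-(τ * B x)) - exp (-(τ / c)))))
      =ᶠ[atTop] fun x => β⁻¹ * (exp (-τ) * c + x⁻¹ * exp (-(x * τ)) * s)
        - β⁻¹ * (B x)⁻¹ * exp (-(τ * B x)) - β⁻¹ * (exp (-τ) - exp (-(τ / c))) * c := by
    filter_upwards [eventually_gt_atTop 0] with x hx
    have hB_inv : (B x)⁻¹ = c + s * x⁻¹ := by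
      simp only [B]
      field_simp
    rw [hB_inv]
    ring
  exact ((((hexp_x.const_mul_left s).sub (hexp_B.const_mul_left s)).sub
    ((isBigO_exp_neg_mul_div_mul_add_sub hc hs hτ).const_mul_left c)).const_mul_left β⁻¹).congr'
      hdecomp EventuallyEq.rfl

end

lemma isBigO_abs_sub_of_isBigO_sub {α : Type*} {l : Filter α} {f g : α → ℝ} {L : ℝ}
    (hL : 0 ≤ L) (h : (fun x => f x - L) =O[l] g) : (fun x => |f x| - L) =O[l] g :=
  (isBigO_of_le _ fun x => by
    simpa only [Real.norm_eq_abs, abs_of_nonneg hL] using abs_abs_sub_abs_le_abs_sub (f x) L).trans h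

/-- In the two-dimensional setting, for fixed `θ ∈ (-π/2, π/2)`, `β > 0`,
`τ > 0`, with `R(τ)(λ) = β⁻¹(e^{-τ} cos²θ + λ⁻¹ e^{-λτ} sin²θ)` and
`R₁(τ)(λ) = β⁻¹ B⁻¹ e^{-τB}`, `B = λ/(λ cos²θ + sin²θ)`, the absolute autocovariance
error of Approach 1 satisfies
`|R(τ) - R₁(τ)| = β⁻¹ (e^{-τ} - e^{-τ sec²θ}) cos²θ + O(λ⁻¹)` as `λ → +∞`. -/
theorem stmt_17 (θ β τ : ℝ) (hθ : θ ∈ Set.Ioo (-(π / 2)) (π / 2))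
    (hβ : 0 < β) (hτ : 0 < τ)
    (B : ℝ → ℝ) (hB : ∀ lam, B lam = lam / (lam * Real.cos θ ^ 2 + Real.sin θ ^ 2))
    (R R₁ : ℝ → ℝ)
    (hR : ∀ lam, R lam = β⁻¹ * (Real.exp (-τ) * Real.cos θ ^ 2
      + lam⁻¹ * Real.exp (-(lam * τ)) * Real.sin θ ^ 2))
    (hR₁ : ∀ lam, R₁ lam = β⁻¹ * (B lam)⁻¹ * Real.exp (-(τ * B lam))) :
    (fun lam => |R lam - R₁ lam|
        - β⁻¹ * (Real.exp (-τ) - Real.exp (-(τ / Real.cos θ ^ 2))) * Real.cos θ ^ 2)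
      =O[atTop] fun lam => lam⁻¹ := by
  have hc : 0 < cos θ ^ 2 := pow_pos (cos_pos_of_mem_Ioo hθ) 2
  have hlimit_nonneg : 0 ≤ β⁻¹ * (exp (-τ) - exp (-(τ / cos θ ^ 2))) * cos θ ^ 2 := by
    have hexp : 0 ≤ exp (-τ) - exp (-(τ / cos θ ^ 2)) :=
      sub_nonneg.mpr (exp_le_exp.mpr (neg_le_neg (le_div_self hτ.le hc (cos_sq_le_one θ))))
    positivity
  refine isBigO_abs_sub_of_isBigO_sub hlimit_nonneg ?_
  simp only [hR, hR₁, hB]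
  exact isBigO_autocov_diff_sub_limit hc (sq_nonneg _) hτ.le β
end

section
/- In the two-dimensional setting, fix θ ∈ (−π/2, π/2), β > 0, and τ > 0. With R(τ) := β⁻¹ (e^{−τ} cos²θ + λ⁻¹ e^{−λτ} sin²θ) and R₁(τ) := β⁻¹ B⁻¹ e^{−τB}, B = λ / (λ cos²θ + sin²θ), the relative autocovariance error satisfies, as λ → +∞, |R(τ) − R₁(τ)| / R(τ) = 1 − e^{−τ tan²θ} + O(λ⁻¹); that is, the function λ ↦ |R(τ) − R₁(τ)| / R(τ) − (1 − e^{−τ tan²θ}) is O(λ⁻¹) as λ → +∞. In particular, at τ = 1, |R(1) − R₁(1)| / R(1) = 1 − e^{−tan²θ} + O(λ⁻¹). -/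
/-!
Write `c = cos²θ` and `s = sin²θ`. As `λ → ∞`, `β R(t) = c e^{-t} + O(λ⁻¹)`, and since
`B⁻¹ = c + s λ⁻¹`, `β R₁(t) = φ(c + s λ⁻¹)` with `φ m = m e^{-t/m}` differentiable at `c`, so
`β R₁(t) = c e^{-t/c} + O(λ⁻¹)`. Hence `R₁/R = e^{t - t/c} + O(λ⁻¹) = e^{-t tan²θ} + O(λ⁻¹)`.
The absolute value costs nothing: `||1 - x| - (1 - y)| ≤ |x - y|` whenever `y ≤ 1`, so the sign
of `R - R₁` never has to be determined.
-/

open Real Filter Asymptotics Topology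

namespace Asymptotics

variable {α : Type*} {l : Filter α}

theorem IsBigO.abs_sub_of_nonneg {E : Type*} [Norm E] {f : α → ℝ} {g : α → E} {a : ℝ}
    (h : (fun x => f x - a) =O[l] g) (ha : 0 ≤ a) : (fun x => |f x| - a) =O[l] g := by
  refine (isBigO_of_le l fun x => ?_).trans h
  simpa only [norm_eq_abs, abs_of_nonneg ha] using abs_abs_sub_abs_le_abs_sub (f x) a

theorem IsBigO.div_sub_div {𝕜 : Type*} [NormedField 𝕜] {u v g : α → 𝕜} {a b : 𝕜}
    (hu : (fun x => u x - a) =O[l] g) (hv : (fun x => v x - b) =O[l] g)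
    (hvb : Tendsto v l (𝓝 b)) (hb : b ≠ 0) : (fun x => u x / v x - a / b) =O[l] g := by
  have hinv : (fun x => (v x)⁻¹) =O[l] fun _ => (1 : 𝕜) := (hvb.inv₀ hb).isBigO_one 𝕜
  have hmain := hinv.mul (hu.sub (hv.const_mul_left (a / b)))
  simp only [one_mul] at hmain
  refine hmain.congr' ?_ EventuallyEq.rfl
  filter_upwards [hvb.eventually_ne hb] with x hx
  field_simp
  ring

end Asymptotics

noncomputable section

-- `B`, `R` and `R₁` of the statement, with `c = cos²θ` and `s = sin²θ`.
def approxRate (c s lam : ℝ) : ℝ := lam / (lam * c + s)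

def autocov (β c s t lam : ℝ) : ℝ := β⁻¹ * (exp (-t) * c + lam⁻¹ * exp (-(lam * t)) * s)

def approxAutocov (β c s t lam : ℝ) : ℝ :=
  β⁻¹ * (approxRate c s lam)⁻¹ * exp (-(t * approxRate c s lam))

end

theorem inv_approxRate {lam : ℝ} (hlam : lam ≠ 0) (c s : ℝ) :
    (approxRate c s lam)⁻¹ = c + s * lam⁻¹ := by
  rw [approxRate, inv_div]
  field_simp

theorem isBigO_inv_mul_exp_neg_mul {t : ℝ} (ht : 0 ≤ t) (s : ℝ) :
    (fun lam : ℝ => lam⁻¹ * exp (-(lam * t)) * s) =O[atTop] fun lam => lam⁻¹ := by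
  refine IsBigO.of_bound |s| ?_
  filter_upwards [eventually_ge_atTop 0] with lam hlam
  have hexp : exp (-(lam * t)) ≤ 1 := exp_le_one_iff.2 (by nlinarith)
  simp only [norm_eq_abs, abs_mul, abs_exp]
  nlinarith [abs_nonneg lam⁻¹, abs_nonneg s, mul_nonneg (abs_nonneg lam⁻¹) (abs_nonneg s)]

theorem isBigO_inv_approxRate_mul_exp_sub {c : ℝ} (hc : 0 < c) (s t : ℝ) :
    (fun lam => (approxRate c s lam)⁻¹ * exp (-(t * approxRate c s lam)) - c * exp (-(t / c)))
      =O[atTop] fun lam => lam⁻¹ := by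
  set φ : ℝ → ℝ := fun m => m * exp (-(t / m))
  have hφ : DifferentiableAt ℝ φ c := by fun_prop (disch := exact hc.ne')
  have hmean : Tendsto (fun lam : ℝ => c + s * lam⁻¹) atTop (𝓝 c) := by
    simpa using (tendsto_inv_atTop_zero.const_mul s).const_add c
  have hshift : (fun lam : ℝ => c + s * lam⁻¹ - c) =O[atTop] fun lam => lam⁻¹ := by
    simpa using isBigO_const_mul_self s (fun lam : ℝ => lam⁻¹) atTop
  refine ((hφ.isBigO_sub.comp_tendsto hmean).trans hshift).congr' ?_ EventuallyEq.rfl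
  filter_upwards [eventually_ne_atTop 0] with lam hlam
  simp only [Function.comp, φ, ← inv_approxRate hlam, div_inv_eq_mul]

theorem approxAutocov_div_autocov_sub_isBigO {β c s t : ℝ} (hβ : β ≠ 0) (hc : 0 < c)
    (hcs : c + s = 1) (ht : 0 ≤ t) :
    (fun lam => approxAutocov β c s t lam / autocov β c s t lam - exp (-(t * (s / c))))
      =O[atTop] fun lam => lam⁻¹ := by
  have hD : (fun lam => (exp (-t) * c + lam⁻¹ * exp (-(lam * t)) * s) - exp (-t) * c)
      =O[atTop] fun lam => lam⁻¹ := by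
    simpa only [add_sub_cancel_left] using isBigO_inv_mul_exp_neg_mul ht s
  have hD_lim : Tendsto (fun lam => exp (-t) * c + lam⁻¹ * exp (-(lam * t)) * s) atTop
      (𝓝 (exp (-t) * c)) :=
    tendsto_sub_nhds_zero_iff.1 (hD.trans_tendsto tendsto_inv_atTop_zero)
  have hlim : c * exp (-(t / c)) / (exp (-t) * c) = exp (-(t * (s / c))) := by
    rw [mul_comm (exp _) c, mul_div_mul_left _ _ hc.ne', ← exp_sub]
    congr 1
    field_simp
    linear_combination t * hcs
  rw [← hlim]
  refine (IsBigO.div_sub_div (isBigO_inv_approxRate_mul_exp_sub hc s t) hD hD_lim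
    (by positivity)).congr_left fun lam => ?_
  rw [approxAutocov, autocov, mul_assoc β⁻¹, mul_div_mul_left _ _ (inv_ne_zero hβ)]

theorem relError_autocov_sub_isBigO {β c s t : ℝ} (hβ : 0 < β) (hc : 0 < c) (hs : 0 ≤ s)
    (hcs : c + s = 1) (ht : 0 ≤ t) :
    (fun lam => |autocov β c s t lam - approxAutocov β c s t lam| / autocov β c s t lam
        - (1 - exp (-(t * (s / c))))) =O[atTop] fun lam => lam⁻¹ := by
  have hpos : ∀ᶠ lam in atTop, 0 < autocov β c s t lam := by
    filter_upwards [eventually_gt_atTop 0] with lam hlam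
    unfold autocov
    positivity
  have hE : 0 ≤ 1 - exp (-(t * (s / c))) :=
    sub_nonneg.2 (exp_le_one_iff.2 (neg_nonpos.2 (by positivity)))
  have hcompl : (fun lam => (1 - approxAutocov β c s t lam / autocov β c s t lam)
      - (1 - exp (-(t * (s / c))))) =O[atTop] fun lam => lam⁻¹ :=
    (approxAutocov_div_autocov_sub_isBigO hβ.ne' hc hcs ht).neg_left.congr_left fun lam => by ring
  refine (hcompl.abs_sub_of_nonneg hE).congr' ?_ EventuallyEq.rfl
  filter_upwards [hpos] with lam hR
  rw [one_sub_div hR.ne', abs_div, abs_of_pos hR]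

/-- In the two-dimensional setting, for fixed `θ ∈ (-π/2, π/2)`, `β > 0`,
`τ > 0`, the relative autocovariance error of Approach 1 satisfies, as `λ → +∞`,
`|R(τ) - R₁(τ)| / R(τ) = 1 - e^{-τ tan²θ} + O(λ⁻¹)`; in particular at `τ = 1`,
`|R(1) - R₁(1)| / R(1) = 1 - e^{-tan²θ} + O(λ⁻¹)`.
Here `R(τ)(λ) = β⁻¹(e^{-τ} cos²θ + λ⁻¹ e^{-λτ} sin²θ)`,
`R₁(τ)(λ) = β⁻¹ B⁻¹ e^{-τB}`, `B = λ/(λ cos²θ + sin²θ)`. -/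
theorem stmt_18 (θ β τ : ℝ) (hθ : θ ∈ Set.Ioo (-(π / 2)) (π / 2))
    (hβ : 0 < β) (hτ : 0 < τ)
    (B : ℝ → ℝ) (hB : ∀ lam, B lam = lam / (lam * Real.cos θ ^ 2 + Real.sin θ ^ 2))
    (R R₁ : ℝ → ℝ → ℝ)
    (hR : ∀ t lam, R t lam = β⁻¹ * (Real.exp (-t) * Real.cos θ ^ 2
      + lam⁻¹ * Real.exp (-(lam * t)) * Real.sin θ ^ 2))
    (hR₁ : ∀ t lam, R₁ t lam = β⁻¹ * (B lam)⁻¹ * Real.exp (-(t * B lam))) :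
    ((fun lam => |R τ lam - R₁ τ lam| / R τ lam
        - (1 - Real.exp (-(τ * Real.tan θ ^ 2))))
      =O[atTop] fun lam => lam⁻¹) ∧
    ((fun lam => |R 1 lam - R₁ 1 lam| / R 1 lam
        - (1 - Real.exp (-(Real.tan θ ^ 2))))
      =O[atTop] fun lam => lam⁻¹) := by
  obtain rfl : B = approxRate (cos θ ^ 2) (sin θ ^ 2) := funext hB
  obtain rfl : R = autocov β (cos θ ^ 2) (sin θ ^ 2) := funext₂ hR
  obtain rfl : R₁ = approxAutocov β (cos θ ^ 2) (sin θ ^ 2) := funext₂ hR₁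
  have hc : 0 < cos θ ^ 2 := pow_pos (cos_pos_of_mem_Ioo hθ) 2
  have hrelError {t : ℝ} (ht : 0 ≤ t) := relError_autocov_sub_isBigO hβ hc (sq_nonneg (sin θ))
    (cos_sq_add_sin_sq θ) ht
  rw [tan_eq_sin_div_cos, div_pow]
  exact ⟨hrelError hτ.le, by simpa using hrelError zero_le_one⟩
end

section
/- In the two-dimensional setting, fix θ ∈ (−π/2, π/2), β > 0, and τ > 0. Define R(τ) := β⁻¹ (e^{−τ} cos²θ + λ⁻¹ e^{−λτ} sin²θ) and R₂(τ) := β⁻¹ B⁻¹ e^{−τ BC}, where B = λ / (λ cos²θ + sin²θ) and BC = (λ sin²θ + λ² cos²θ) / (sin²θ + λ² cos²θ). Then, as λ → +∞, |R(τ) − R₂(τ)| = β⁻¹ (sin²θ / λ) |e^{−λτ} − e^{−τ}(1 − τ)| + O(λ⁻²); that is, the function λ ↦ |R(τ) − R₂(τ)| − β⁻¹ (sin²θ / λ) |e^{−λτ} − e^{−τ}(1 − τ)| is O(λ⁻²) as λ → +∞. -/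
open Real Filter Asymptotics Topology

/-!
Write `c = cos²θ`, `s = sin²θ`. Then `B⁻¹ = c + s/λ` and `τ BC = τ + u` with
`u = τ s (λ - 1)/(s + c λ²) = τ s/(c λ) + O(λ⁻²)`, so that
`R - R₂ - β⁻¹ (s/λ)(e^{-λτ} - e^{-τ}(1 - τ)) = β⁻¹ e^{-τ} ((c + s/λ)(1 - e^{-u}) - s τ/λ)`.
Expanding `1 - e^{-u} = u + O(u²)`, the `1/λ` terms cancel and what is left is `O(λ⁻²)`;
`||a| - |b|| ≤ |a - b|` carries this over to the absolute values.
-/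

theorem Asymptotics.IsBigO.abs_sub_mul_abs {α : Type*} {l : Filter α} {f g k φ : α → ℝ}
    (hk : ∀ᶠ x in l, 0 ≤ k x) (h : (fun x => f x - k x * g x) =O[l] φ) :
    (fun x => |f x| - k x * |g x|) =O[l] φ := by
  refine (IsBigO.of_bound 1 ?_).trans h
  filter_upwards [hk] with x hx
  have h := abs_abs_sub_abs_le_abs_sub (f x) (k x * g x)
  rw [abs_mul, abs_of_nonneg hx] at h
  rwa [one_mul, norm_eq_abs, norm_eq_abs]

theorem isBigO_exp_sub_one_sub_self :
    (fun x : ℝ => exp x - 1 - x) =O[𝓝 0] fun x => x ^ 2 := by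
  refine IsBigO.of_bound 1 ?_
  filter_upwards [Metric.closedBall_mem_nhds (0 : ℝ) one_pos] with x hx
  rw [one_mul, norm_eq_abs, norm_pow, norm_eq_abs, sq_abs]
  exact abs_exp_sub_one_sub_id_le (by simpa using hx)

/-- `BC - 1`, with `c = cos²θ` and `s = sin²θ`. -/
noncomputable def rateExcess (c s L : ℝ) : ℝ := s * (L - 1) / (s + c * L ^ 2)

section
variable {c s : ℝ}

theorem rateExcess_sub_isBigO_inv_sq (hc : 0 < c) (hs : 0 ≤ s) :
    (fun L => rateExcess c s L - s / (c * L)) =O[atTop] fun L => (L ^ 2)⁻¹ := by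
  refine IsBigO.of_bound (s * (c + s) / c ^ 2) ?_
  filter_upwards [eventually_ge_atTop 1] with L hL
  have hL0 : 0 < L := by linarith
  have hden : c * L ^ 2 ≤ s + c * L ^ 2 := by linarith
  have hnum : c * L + s ≤ (c + s) * L := by nlinarith
  have hdiff : rateExcess c s L - s / (c * L)
      = -(s * (c * L + s) / (c * L * (s + c * L ^ 2))) := by
    unfold rateExcess
    field_simp
    ring
  rw [hdiff, norm_neg, norm_inv, norm_pow, norm_eq_abs, norm_eq_abs, abs_of_nonneg hL0.le,
    abs_of_nonneg (by positivity), div_le_iff₀ (by positivity)]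
  calc s * (c * L + s) ≤ s * ((c + s) * L) := mul_le_mul_of_nonneg_left hnum hs
    _ = s * (c + s) / c ^ 2 * (L ^ 2)⁻¹ * (c * L * (c * L ^ 2)) := by field_simp
    _ ≤ s * (c + s) / c ^ 2 * (L ^ 2)⁻¹ * (c * L * (s + c * L ^ 2)) := by gcongr

theorem isBigO_inv_sq_inv_atTop : (fun L : ℝ => (L ^ 2)⁻¹) =O[atTop] fun L => L⁻¹ := by
  have h := (isBigO_refl (fun L : ℝ => L⁻¹) atTop).mul (tendsto_inv_atTop_zero.isBigO_one ℝ)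
  simpa only [mul_one, ← sq, inv_pow] using h

theorem rateExcess_isBigO_inv (hc : 0 < c) (hs : 0 ≤ s) :
    rateExcess c s =O[atTop] fun L => L⁻¹ := by
  have hlead : (fun L => s / (c * L)) =O[atTop] fun L => L⁻¹ :=
    ((isBigO_refl (fun L : ℝ => L⁻¹) atTop).const_mul_left (s / c)).congr_left fun L => by ring
  simpa using ((rateExcess_sub_isBigO_inv_sq hc hs).trans isBigO_inv_sq_inv_atTop).add hlead

theorem tendsto_rateExcess_atTop (hc : 0 < c) (hs : 0 ≤ s) :
    Tendsto (rateExcess c s) atTop (𝓝 0) :=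
  (rateExcess_isBigO_inv hc hs).trans_tendsto tendsto_inv_atTop_zero

theorem mul_one_sub_exp_rateExcess_sub_isBigO (hc : 0 < c) (hs : 0 ≤ s) (τ : ℝ) :
    (fun L => (c + s / L) * (1 - exp (-(τ * rateExcess c s L))) - s * τ / L)
      =O[atTop] fun L => (L ^ 2)⁻¹ := by
  set u := fun L => τ * rateExcess c s L with hu_def
  have hu : u =O[atTop] fun L => L⁻¹ := (rateExcess_isBigO_inv hc hs).const_mul_left τ
  have hlin : (fun L => c * τ * (rateExcess c s L - s / (c * L))) =O[atTop]
      fun L => (L ^ 2)⁻¹ :=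
    (rateExcess_sub_isBigO_inv_sq hc hs).const_mul_left (c * τ)
  have hcross : (fun L => s / L * u L) =O[atTop] fun L => (L ^ 2)⁻¹ := by
    have h := ((isBigO_refl (fun L : ℝ => L⁻¹) atTop).const_mul_left s).mul hu
    simpa only [div_eq_mul_inv, sq, mul_inv] using h
  have hcoef : (fun L => c + s / L) =O[atTop] fun _ => (1 : ℝ) :=
    (tendsto_const_nhds.add (tendsto_const_nhds.div_atTop tendsto_id)).isBigO_one ℝ
  have hrem : (fun L => exp (-u L) - 1 - -u L) =O[atTop] fun L => (L ^ 2)⁻¹ := by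
    have hneg : Tendsto (fun L => -u L) atTop (𝓝 0) := by
      simpa using ((tendsto_rateExcess_atTop hc hs).const_mul τ).neg
    have h := (isBigO_exp_sub_one_sub_self.comp_tendsto hneg).trans (hu.neg_left.pow 2)
    simpa only [Function.comp_def, inv_pow] using h
  refine ((hlin.add hcross).sub ((hcoef.mul hrem).congr_right fun L => one_mul _)).congr_left
    fun L => ?_
  simp only [hu_def]
  field_simp
  ring

end

theorem stmt_19_general (θ β τ : ℝ) (hθ : θ ∈ Set.Ioo (-(π / 2)) (π / 2))
    (hβ : 0 < β)
    (B : ℝ → ℝ) (hB : ∀ lam, B lam = lam / (lam * Real.cos θ ^ 2 + Real.sin θ ^ 2))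
    (BC : ℝ → ℝ) (hBC : ∀ lam, BC lam = (lam * Real.sin θ ^ 2 + lam ^ 2 * Real.cos θ ^ 2)
      / (Real.sin θ ^ 2 + lam ^ 2 * Real.cos θ ^ 2))
    (R R₂ : ℝ → ℝ)
    (hR : ∀ lam, R lam = β⁻¹ * (Real.exp (-τ) * Real.cos θ ^ 2
      + lam⁻¹ * Real.exp (-(lam * τ)) * Real.sin θ ^ 2))
    (hR₂ : ∀ lam, R₂ lam = β⁻¹ * (B lam)⁻¹ * Real.exp (-(τ * BC lam))) :
    (fun lam => |R lam - R₂ lam|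
        - β⁻¹ * (Real.sin θ ^ 2 / lam)
          * |Real.exp (-(lam * τ)) - Real.exp (-τ) * (1 - τ)|)
      =O[atTop] fun lam => (lam ^ 2)⁻¹ := by
  have hc : 0 < cos θ ^ 2 := pow_pos (cos_pos_of_mem_Ioo hθ) 2
  have hs : 0 ≤ sin θ ^ 2 := sq_nonneg _
  have hdiff : (fun L => R L - R₂ L
      - β⁻¹ * (sin θ ^ 2 / L) * (exp (-(L * τ)) - exp (-τ) * (1 - τ))) =O[atTop]
      fun L => (L ^ 2)⁻¹ := by
    refine ((mul_one_sub_exp_rateExcess_sub_isBigO hc hs τ).const_mul_left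
      (β⁻¹ * exp (-τ))).congr' ?_ .rfl
    filter_upwards [eventually_gt_atTop 0] with L hL
    have hBinv : (B L)⁻¹ = cos θ ^ 2 + sin θ ^ 2 / L := by
      rw [hB, inv_div]; field_simp
    have hrate : τ * BC L = τ + τ * rateExcess (cos θ ^ 2) (sin θ ^ 2) L := by
      rw [hBC, rateExcess]; field_simp; ring
    rw [hR, hR₂, hBinv, hrate, neg_add, exp_add]
    field_simp
    ring
  refine hdiff.abs_sub_mul_abs ?_
  filter_upwards [eventually_gt_atTop 0] with L hL
  positivity

/-- In the two-dimensional setting, for fixed `θ ∈ (-π/2, π/2)`, `β > 0`,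
`τ > 0`, the absolute autocovariance error of Approach 2 satisfies, as `λ → +∞`,
`|R(τ) - R₂(τ)| = β⁻¹ (sin²θ/λ) |e^{-λτ} - e^{-τ}(1 - τ)| + O(λ⁻²)`.
Here `R(τ)(λ) = β⁻¹(e^{-τ} cos²θ + λ⁻¹ e^{-λτ} sin²θ)`,
`R₂(τ)(λ) = β⁻¹ B⁻¹ e^{-τ BC}` with `B = λ/(λ cos²θ + sin²θ)` and
`BC = (λ sin²θ + λ² cos²θ)/(sin²θ + λ² cos²θ)`. -/
theorem stmt_19 (θ β τ : ℝ) (hθ : θ ∈ Set.Ioo (-(π / 2)) (π / 2))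
    (hβ : 0 < β) (hτ : 0 < τ)
    (B : ℝ → ℝ) (hB : ∀ lam, B lam = lam / (lam * Real.cos θ ^ 2 + Real.sin θ ^ 2))
    (BC : ℝ → ℝ) (hBC : ∀ lam, BC lam = (lam * Real.sin θ ^ 2 + lam ^ 2 * Real.cos θ ^ 2)
      / (Real.sin θ ^ 2 + lam ^ 2 * Real.cos θ ^ 2))
    (R R₂ : ℝ → ℝ)
    (hR : ∀ lam, R lam = β⁻¹ * (Real.exp (-τ) * Real.cos θ ^ 2
      + lam⁻¹ * Real.exp (-(lam * τ)) * Real.sin θ ^ 2))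
    (hR₂ : ∀ lam, R₂ lam = β⁻¹ * (B lam)⁻¹ * Real.exp (-(τ * BC lam))) :
    (fun lam => |R lam - R₂ lam|
        - β⁻¹ * (Real.sin θ ^ 2 / lam)
          * |Real.exp (-(lam * τ)) - Real.exp (-τ) * (1 - τ)|)
      =O[atTop] fun lam => (lam ^ 2)⁻¹ :=
  stmt_19_general θ β τ hθ hβ B hB BC hBC R R₂ hR hR₂
end
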